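/- The five families of prewavelets ψ^{j,1}_{0,k} = 2φ^{j+1}_{1,2k} + φ^{j+1}_{1,2k+1}, ψ^{j,2}_{k,0} = 2φ^{j+1}_{2k,1} + φ^{j+1}_{2k+1,1} (1 ≤ k ≤ n−1), and ψ^{j,3}_{i,k} = −φ^{j+1}_{2i,2k} + φ^{j+1}_{2i+1,2k} + φ^{j+1}_{2i,2k+1} + φ^{j+1}_{2i+1,2k+1}, ψ^{j,4}_{i,k} = φ^{j+1}_{2i−1,2k−1} + φ^{j+1}_{2i,2k−1} + φ^{j+1}_{2i−1,2k} − φ^{j+1}_{2i,2k}, ψ^{j,5}_{i,k} = φ^{j+1}_{2i−1,2k} + φ^{j+1}_{2i,2k+1} − φ^{j+1}_{2i,2k−1} − φ^{j+1}_{2i+1,2k} (1 ≤ i,k ≤ n−1) are linearly independent, for every 2 ≤ n ≤ 2ʲ−1. -/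

import Mathlib

noncomputable section
open MeasureTheory

/-- The unit square Ω = (0,1) × (0,1). -/
def Omg : Set (ℝ × ℝ) := Set.Ioo 0 1 ×ˢ Set.Ioo 0 1

/-- Partial derivative in the x-direction. -/
def pdx (f : (ℝ × ℝ) → ℝ) (x : ℝ × ℝ) : ℝ := fderiv ℝ f x (1, 0)

/-- Partial derivative in the y-direction. -/
def pdy (f : (ℝ × ℝ) → ℝ) (x : ℝ × ℝ) : ℝ := fderiv ℝ f x (0, 1)

/-- The Dirichlet inner product ⟨u,v⟩ₛ = ∫_Ω ∇u·∇v. -/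
def dirInner (u v : (ℝ × ℝ) → ℝ) : ℝ :=
  ∫ x in Omg, pdx u x * pdx v x + pdy u x * pdy v x

/-- The piecewise-linear hat function of mesh `h` centered at `p` on the
type-1 (three-direction) triangulation. -/
def hat (h : ℝ) (p x : ℝ × ℝ) : ℝ :=
  max 0 (1 - (max |x.1 - p.1| (max |x.2 - p.2| |(x.1 - p.1) - (x.2 - p.2)|)) / h)

/-- The hat function φʲ_{(m,n)} at the vertex (m/2ʲ, n/2ʲ) of the type-1
triangulation of Ω of mesh 2^{-j} (vanishing on ∂Ω for interior vertices). -/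
def hatL (j m n : ℕ) : (ℝ × ℝ) → ℝ :=
  hat ((2 : ℝ) ^ j)⁻¹ ((m : ℝ) / 2 ^ j, (n : ℝ) / 2 ^ j)

/-- The five families of prewavelets of level j, truncation parameter n,
indexed by (k) for the two boundary families (k = 1,…,n−1 encoded as
Fin (n−1)) and by (i,k) for the three interior families. -/
def preWavelet (j n : ℕ)
    (idx : (Fin (n - 1) ⊕ Fin (n - 1)) ⊕
      (Fin (n - 1) × Fin (n - 1)) ⊕ (Fin (n - 1) × Fin (n - 1)) ⊕
      (Fin (n - 1) × Fin (n - 1))) : (ℝ × ℝ) → ℝ :=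
  match idx with
  | Sum.inl (Sum.inl a) => fun x =>
      2 * hatL (j + 1) 1 (2 * ((a : ℕ) + 1)) x + hatL (j + 1) 1 (2 * ((a : ℕ) + 1) + 1) x
  | Sum.inl (Sum.inr a) => fun x =>
      2 * hatL (j + 1) (2 * ((a : ℕ) + 1)) 1 x + hatL (j + 1) (2 * ((a : ℕ) + 1) + 1) 1 x
  | Sum.inr (Sum.inl (a, b)) => fun x =>
      -hatL (j + 1) (2 * ((a : ℕ) + 1)) (2 * ((b : ℕ) + 1)) x +
        hatL (j + 1) (2 * ((a : ℕ) + 1) + 1) (2 * ((b : ℕ) + 1)) x +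
        hatL (j + 1) (2 * ((a : ℕ) + 1)) (2 * ((b : ℕ) + 1) + 1) x +
        hatL (j + 1) (2 * ((a : ℕ) + 1) + 1) (2 * ((b : ℕ) + 1) + 1) x
  | Sum.inr (Sum.inr (Sum.inl (a, b))) => fun x =>
      hatL (j + 1) (2 * ((a : ℕ) + 1) - 1) (2 * ((b : ℕ) + 1) - 1) x +
        hatL (j + 1) (2 * ((a : ℕ) + 1)) (2 * ((b : ℕ) + 1) - 1) x +
        hatL (j + 1) (2 * ((a : ℕ) + 1) - 1) (2 * ((b : ℕ) + 1)) x -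
        hatL (j + 1) (2 * ((a : ℕ) + 1)) (2 * ((b : ℕ) + 1)) x
  | Sum.inr (Sum.inr (Sum.inr (a, b))) => fun x =>
      hatL (j + 1) (2 * ((a : ℕ) + 1) - 1) (2 * ((b : ℕ) + 1)) x +
        hatL (j + 1) (2 * ((a : ℕ) + 1)) (2 * ((b : ℕ) + 1) + 1) x -
        hatL (j + 1) (2 * ((a : ℕ) + 1)) (2 * ((b : ℕ) + 1) - 1) x -
        hatL (j + 1) (2 * ((a : ℕ) + 1) + 1) (2 * ((b : ℕ) + 1)) x

/-!
Every fine hat function `hatL (j+1) m k` equals `1` at its own vertex `(m, k) / 2^(j+1)` and `0` at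
all other vertices of the grid, so evaluating at a vertex reads off one coefficient of the
expansion of a prewavelet in fine hat functions. To each prewavelet we attach a pivot vertex
where its coefficient is nonzero and a rank such that every other prewavelet with nonzero
coefficient at that vertex has smaller rank; linear independence then follows by induction on
the rank, as for a triangular matrix.
-/

theorem linearIndependent_of_triangular {R M ι : Type*} [Ring R] [NoZeroDivisors R]
    [AddCommGroup M] [Module R M] {v : ι → M} (f : ι → M →ₗ[R] R) (rank : ι → ℕ)
    (hdiag : ∀ i, f i (v i) ≠ 0) (htri : ∀ i j, j ≠ i → f i (v j) ≠ 0 → rank j < rank i) :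
    LinearIndependent R v := by
  rw [linearIndependent_iff]
  intro l hl
  ext i
  induction hr : rank i using Nat.strong_induction_on generalizing i with
  | _ r ih =>
    have hfi : l.sum (fun j c => c * f i (v j)) = 0 := by
      simpa [Finsupp.linearCombination_apply, map_finsuppSum] using congrArg (f i) hl
    rw [Finsupp.sum_eq_single i _ (by simp)] at hfi
    · exact (mul_eq_zero.mp hfi).resolve_right (hdiag i)
    · intro j _ hji
      by_cases hv : f i (v j) = 0
      · simp [hv]
      · simp [ih _ (hr ▸ htri i j hji hv) j rfl]

def gridPoint (J : ℕ) (p : ℕ × ℕ) : ℝ × ℝ := ((p.1 : ℝ) / 2 ^ J, (p.2 : ℝ) / 2 ^ J)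

theorem hat_self {h : ℝ} (p : ℝ × ℝ) : hat h p p = 1 := by
  simp [hat]

theorem hat_eq_zero {h : ℝ} {p x : ℝ × ℝ} (hh : 0 < h)
    (hx : h ≤ |x.1 - p.1| ∨ h ≤ |x.2 - p.2|) : hat h p x = 0 := by
  have hmax : h ≤ max |x.1 - p.1| (max |x.2 - p.2| |(x.1 - p.1) - (x.2 - p.2)|) :=
    hx.elim le_max_of_le_left fun hx => le_max_of_le_right (le_max_of_le_left hx)
  exact max_eq_left (sub_nonpos.mpr ((one_le_div hh).mpr hmax))

theorem inv_two_pow_le_abs_sub_div {J m m' : ℕ} (hm : m ≠ m') :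
    ((2 : ℝ) ^ J)⁻¹ ≤ |(m' : ℝ) / 2 ^ J - m / 2 ^ J| := by
  have hdist : (1 : ℝ) ≤ |(m' : ℝ) - m| := by
    have h : (m' : ℤ) - m ≠ 0 := sub_ne_zero.mpr (by exact_mod_cast hm.symm)
    exact_mod_cast Int.one_le_abs h
  rw [← sub_div, abs_div, abs_of_pos (a := (2 : ℝ) ^ J) (by positivity), inv_eq_one_div]
  exact div_le_div_of_nonneg_right hdist (by positivity)

theorem hatL_gridPoint (J m k : ℕ) (p : ℕ × ℕ) :
    hatL J m k (gridPoint J p) = if (m, k) = p then 1 else 0 := by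
  split_ifs with h
  · subst h
    exact hat_self _
  · refine hat_eq_zero (by positivity) ?_
    rw [Prod.ext_iff] at h
    rcases not_and_or.mp h with h | h
    · exact .inl (inv_two_pow_le_abs_sub_div h)
    · exact .inr (inv_two_pow_le_abs_sub_div h)

-- `a : Fin (n - 1)` stands for the index `a + 1` of the paper.
abbrev PreWaveletIndex (n : ℕ) : Type :=
  (Fin (n - 1) ⊕ Fin (n - 1)) ⊕
    (Fin (n - 1) × Fin (n - 1)) ⊕ (Fin (n - 1) × Fin (n - 1)) ⊕ (Fin (n - 1) × Fin (n - 1))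

def preWaveletPivot {n : ℕ} : PreWaveletIndex n → ℕ × ℕ
  | .inl (.inl b) => (1, 2 * b + 3)
  | .inl (.inr a) => (2 * a + 3, 1)
  | .inr (.inl (a, b)) => (2 * a + 3, 2 * b + 3)
  | .inr (.inr (.inl (a, b))) => (2 * a + 2, 2 * b + 2)
  | .inr (.inr (.inr (a, b))) => (2 * a + 2, 2 * b + 1)

/- At the pivot of `ψ³_{i,k}` only `ψ⁴_{i+1,k+1}` also lives, at that of `ψ⁴_{i,k}` only
`ψ³_{i,k}`, at those of `ψ¹_k`, `ψ²_k` only `ψ⁴` on the first row or column, and at that of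
`ψ⁵_{i,k}` only `ψ²_i`, `ψ³_{i,k-1}`, `ψ⁴_{i,k}` and `ψ⁵_{i,k-1}`: so `ψ³`, `ψ⁴` are ranked by
decreasing `i + k`, then come `ψ¹`, `ψ²`, then `ψ⁵` by increasing `k`. -/
def preWaveletRank {n : ℕ} : PreWaveletIndex n → ℕ
  | .inl _ => 4 * n + 2
  | .inr (.inl (a, b)) => 2 * (2 * n - a - b)
  | .inr (.inr (.inl (a, b))) => 2 * (2 * n - a - b) + 1
  | .inr (.inr (.inr (_, b))) => 4 * n + 3 + b

theorem preWavelet_pivot_ne_zero (j n : ℕ) (i : PreWaveletIndex n) :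
    preWavelet j n i (gridPoint (j + 1) (preWaveletPivot i)) ≠ 0 := by
  rcases i with (b | a) | ⟨a, b⟩ | ⟨a, b⟩ | ⟨a, b⟩ <;>
    simp only [preWavelet, preWaveletPivot, hatL_gridPoint, Prod.mk.injEq, true_and, and_true] <;>
    split_ifs <;> first | omega | norm_num

theorem preWavelet_triangular (j n : ℕ) (i i' : PreWaveletIndex n) (hne : i' ≠ i)
    (h : preWavelet j n i' (gridPoint (j + 1) (preWaveletPivot i)) ≠ 0) :
    preWaveletRank i' < preWaveletRank i := by
  rcases i with (b | a) | ⟨a, b⟩ | ⟨a, b⟩ | ⟨a, b⟩ <;>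
  rcases i' with (b' | a') | ⟨a', b'⟩ | ⟨a', b'⟩ | ⟨a', b'⟩ <;>
  simp only [preWavelet, preWaveletPivot, preWaveletRank, hatL_gridPoint, Prod.mk.injEq,
    ne_eq, Sum.inl.injEq, Sum.inr.injEq, reduceCtorEq, not_false_eq_true, Fin.ext_iff] at h hne ⊢ <;>
  split_ifs at h <;> first | omega | norm_num at h

theorem stmt17_general (j n : ℕ) :
    LinearIndependent ℝ (preWavelet j n) :=
  linearIndependent_of_triangular
    (fun i => LinearMap.proj (R := ℝ) (φ := fun _ => ℝ) (gridPoint (j + 1) (preWaveletPivot i)))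
    preWaveletRank (preWavelet_pivot_ne_zero j n) (preWavelet_triangular j n)

/-- For every 2 ≤ n ≤ 2ʲ−1, the five families of prewavelets
ψ^{j,1}_{0,k}, ψ^{j,2}_{k,0} (1 ≤ k ≤ n−1) and ψ^{j,3}_{i,k}, ψ^{j,4}_{i,k},
ψ^{j,5}_{i,k} (1 ≤ i,k ≤ n−1) are linearly independent. -/
theorem stmt17 (j n : ℕ) (hn2 : 2 ≤ n) (hn : n ≤ 2 ^ j - 1) :
    LinearIndependent ℝ (preWavelet j n) :=
  stmt17_general j n
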